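/- Let f : ℝ → ℝ be the inverse of h and define L : ℝ → ℝ by L(v) = f(v)². Then there exists a constant C₀ > 0 such that L(2v) ≤ C₀·L(v) for every v ∈ ℝ (the Δ₂-condition for L). -/

import Mathlib

/-!
Since h' u = √(1 + u²) is positive and increasing on [0, ∞), h is strictly increasing and convex
there; it is also odd, so h 0 = 0 and convexity gives 2 h(u) ≤ h(2u) for u ≥ 0. Oddness turns this
into h(|f(2v)|) = |2v| ≤ h(2|f v|), i.e. |f(2v)| ≤ 2|f v|, so C₀ = 4 works.
-/

/-- The change of variables `h(u) = (1/2)·u·√(1+u²) + (1/2)·log(u + √(1+u²))`. -/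
noncomputable def h (u : ℝ) : ℝ :=
  (1 / 2) * u * Real.sqrt (1 + u ^ 2) + (1 / 2) * Real.log (u + Real.sqrt (1 + u ^ 2))

open Set Real

section OddConvex

variable {φ : ℝ → ℝ}

lemma apply_zero_eq_zero_of_odd (hodd : ∀ x, φ (-x) = -φ x) : φ 0 = 0 := by
  have := hodd 0
  rw [neg_zero] at this
  linarith

lemma abs_apply_eq_apply_abs_of_odd (hφ : StrictMono φ) (hodd : ∀ x, φ (-x) = -φ x) (x : ℝ) :
    |φ x| = φ |x| := by
  have hφ0 := apply_zero_eq_zero_of_odd hodd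
  rcases le_or_gt 0 x with hx | hx
  · rw [abs_of_nonneg hx, abs_of_nonneg (hφ0 ▸ hφ.monotone hx)]
  · rw [abs_of_neg hx, abs_of_neg (hφ0 ▸ hφ hx), hodd]

lemma two_mul_apply_le_apply_two_mul (hconv : ConvexOn ℝ (Ici 0) φ) (hφ0 : φ 0 = 0) {x : ℝ}
    (hx : 0 ≤ x) : 2 * φ x ≤ φ (2 * x) := by
  have hmid := hconv.2 (x := 0) (y := 2 * x) self_mem_Ici (by simpa using hx)
    (by norm_num : (0 : ℝ) ≤ 1 / 2) (by norm_num : (0 : ℝ) ≤ 1 / 2) (by norm_num)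
  simp only [smul_eq_mul, mul_zero, zero_add, hφ0, one_div,
    inv_mul_cancel_left₀ (two_ne_zero : (2 : ℝ) ≠ 0)] at hmid
  linarith

lemma abs_apply_two_mul_le_of_rightInverse (hφ : StrictMono φ) (hodd : ∀ x, φ (-x) = -φ x)
    (hconv : ConvexOn ℝ (Ici 0) φ) {g : ℝ → ℝ} (hg : Function.RightInverse g φ) (v : ℝ) :
    |g (2 * v)| ≤ 2 * |g v| := by
  have habs := abs_apply_eq_apply_abs_of_odd hφ hodd
  refine hφ.le_iff_le.1 ?_
  calc φ |g (2 * v)| = 2 * |φ (g v)| := by rw [← habs, hg, hg, abs_mul, abs_two]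
    _ = 2 * φ |g v| := by rw [habs]
    _ ≤ φ (2 * |g v|) :=
      two_mul_apply_le_apply_two_mul hconv (apply_zero_eq_zero_of_odd hodd) (abs_nonneg _)

end OddConvex

lemma h_eq_mul_sqrt_add_arsinh (u : ℝ) : h u = (u * √(1 + u ^ 2) + arsinh u) / 2 := by
  rw [h, arsinh]; ring

lemma hasDerivAt_h (u : ℝ) : HasDerivAt h √(1 + u ^ 2) u := by
  have hpos : 0 < 1 + u ^ 2 := by positivity
  have hsqrt : HasDerivAt (fun u : ℝ => √(1 + u ^ 2)) (u / √(1 + u ^ 2)) u := by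
    convert ((hasDerivAt_pow 2 u).const_add 1).sqrt hpos.ne' using 1
    simp only [Nat.cast_ofNat, Nat.add_one_sub_one, pow_one]
    field_simp
  have hsum : HasDerivAt (fun u => (u * √(1 + u ^ 2) + arsinh u) / 2)
      ((1 * √(1 + u ^ 2) + u * (u / √(1 + u ^ 2)) + (√(1 + u ^ 2))⁻¹) / 2) u :=
    (((hasDerivAt_id' u).mul hsqrt).add (hasDerivAt_arsinh u)).div_const 2
  rw [show h = _ from funext h_eq_mul_sqrt_add_arsinh]
  refine hsum.congr_deriv ?_
  have hs := sqrt_pos.2 hpos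
  field_simp
  rw [sq_sqrt hpos.le]
  ring

lemma h_strictMono : StrictMono h :=
  strictMono_of_deriv_pos fun u => by
    rw [(hasDerivAt_h u).deriv]
    exact sqrt_pos.2 (by positivity)

lemma h_neg (u : ℝ) : h (-u) = -h u := by
  simp only [h_eq_mul_sqrt_add_arsinh, neg_sq, arsinh_neg]
  ring

lemma convexOn_h : ConvexOn ℝ (Ici 0) h := by
  refine MonotoneOn.convexOn_of_deriv (convex_Ici 0)
    (fun u _ => (hasDerivAt_h u).continuousAt.continuousWithinAt)
    (fun u _ => (hasDerivAt_h u).differentiableAt.differentiableWithinAt) ?_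
  intro x hx y hy hxy
  rw [interior_Ici, mem_Ioi] at hx hy
  simp only [(hasDerivAt_h _).deriv]
  gcongr

theorem stmt_12_general (f : ℝ → ℝ)
    (hf₂ : Function.RightInverse f h) :
    ∃ C₀ : ℝ, 0 < C₀ ∧ ∀ v : ℝ, f (2 * v) ^ 2 ≤ C₀ * f v ^ 2 := by
  refine ⟨4, by norm_num, fun v => ?_⟩
  have hle := abs_apply_two_mul_le_of_rightInverse h_strictMono h_neg convexOn_h hf₂ v
  calc f (2 * v) ^ 2 ≤ (2 * f v) ^ 2 := sq_le_sq.2 (by rwa [abs_mul, abs_two])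
    _ = 4 * f v ^ 2 := by ring

theorem stmt_12 (f : ℝ → ℝ) (hf₁ : Function.LeftInverse f h)
    (hf₂ : Function.RightInverse f h) :
    ∃ C₀ : ℝ, 0 < C₀ ∧ ∀ v : ℝ, f (2 * v) ^ 2 ≤ C₀ * f v ^ 2 :=
  stmt_12_general f hf₂
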